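/- Let f, a be the degree-n vortex profiles (0 < f < 1, 0 < a < 1 on (0,∞)) and set b(r) = n(1-a(r))/r. Define the 2×2 matrix Z₀(r) = [[2λf², -2bf], [-2bf, 1/r² + f²]]. If λ ≥ 2n², then Z₀(r) is positive definite for all r > 0; in particular det(Z₀) = 2λf⁴ + (2f²/r²)(λ - 2n²(1-a)²) > 0 and tr(Z₀) > 0. -/

import Mathlib

open Set

lemma posdef_fin_two (A B C : ℝ) (hA : 0 < A) (hdet : 0 < A * C - B ^ 2) :
    Matrix.PosDef !![A, B; B, C] := by
  rw [Matrix.posDef_iff_dotProduct_mulVec]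
  constructor
  · rw [Matrix.IsHermitian]
    ext i j
    fin_cases i <;> fin_cases j <;> simp [Matrix.conjTranspose, Matrix.transpose, Matrix.vecHead, Matrix.vecTail]
  · intro x hx
    have hx01 : x 0 ≠ 0 ∨ x 1 ≠ 0 := by
      by_contra h
      push_neg at h
      apply hx
      funext i; fin_cases i <;> simp [h.1, h.2]
    simp [Matrix.mulVec, dotProduct, Fin.sum_univ_two]
    rcases eq_or_ne (x 1) 0 with h1 | h1
    · have h0 : x 0 ≠ 0 := by tauto
      rw [h1]
      nlinarith [pow_two_pos_of_ne_zero h0, hA]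
    · nlinarith [sq_nonneg (A * x 0 + B * x 1), mul_pos hdet (pow_two_pos_of_ne_zero h1), hA]

/-- If `λ ≥ 2n²`, the matrix `Z₀(r)` appearing in the decomposition of the
radial Hessian is positive definite for every `r > 0`, with the stated determinant formula. -/
theorem stmt7 (n : ℕ) (hn : 0 < n) (lam : ℝ) (f a : ℝ → ℝ)
    (hf : ∀ r ∈ Ioi (0:ℝ), 0 < f r ∧ f r < 1)
    (ha : ∀ r ∈ Ioi (0:ℝ), 0 < a r ∧ a r < 1)
    (hlam : 2 * (n:ℝ)^2 ≤ lam) :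
    ∀ r ∈ Ioi (0:ℝ),
      (Matrix.PosDef
        !![2*lam*(f r)^2, -2*((n:ℝ)*(1-a r)/r)*(f r);
           -2*((n:ℝ)*(1-a r)/r)*(f r), 1/r^2 + (f r)^2]) ∧
      (Matrix.det
        !![2*lam*(f r)^2, -2*((n:ℝ)*(1-a r)/r)*(f r);
           -2*((n:ℝ)*(1-a r)/r)*(f r), 1/r^2 + (f r)^2]
        = 2*lam*(f r)^4 + (2*(f r)^2/r^2)*(lam - 2*(n:ℝ)^2*(1-a r)^2)) ∧
      (0 < Matrix.det
        !![2*lam*(f r)^2, -2*((n:ℝ)*(1-a r)/r)*(f r);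
           -2*((n:ℝ)*(1-a r)/r)*(f r), 1/r^2 + (f r)^2]) ∧
      (0 < Matrix.trace
        !![2*lam*(f r)^2, -2*((n:ℝ)*(1-a r)/r)*(f r);
           -2*((n:ℝ)*(1-a r)/r)*(f r), 1/r^2 + (f r)^2]) := by
  intro r hr
  rw [mem_Ioi] at hr
  obtain ⟨hf0, hf1⟩ := hf r hr
  obtain ⟨ha0, ha1⟩ := ha r hr
  have hr0 : r ≠ 0 := ne_of_gt hr
  have hn1 : (1:ℝ) ≤ (n:ℝ) := by exact_mod_cast hn
  have hlam0 : 0 < lam := lt_of_lt_of_le (by positivity) hlam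
  have hA : 0 < 2*lam*(f r)^2 := by positivity
  -- determinant formula
  have hdetformula : Matrix.det
      !![2*lam*(f r)^2, -2*((n:ℝ)*(1-a r)/r)*(f r);
         -2*((n:ℝ)*(1-a r)/r)*(f r), 1/r^2 + (f r)^2]
      = 2*lam*(f r)^4 + (2*(f r)^2/r^2)*(lam - 2*(n:ℝ)^2*(1-a r)^2) := by
    rw [Matrix.det_fin_two_of]
    field_simp
    ring
  have hkey : 0 < lam - 2*(n:ℝ)^2*(1-a r)^2 := by
    have h1 : (1 - a r)^2 < 1 := by nlinarith
    have hn2 : (0:ℝ) < (n:ℝ)^2 := by positivity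
    have : 2*(n:ℝ)^2*(1-a r)^2 < 2*(n:ℝ)^2 := by nlinarith
    linarith
  have hdetpos : 0 < 2*lam*(f r)^4 + (2*(f r)^2/r^2)*(lam - 2*(n:ℝ)^2*(1-a r)^2) := by
    positivity
  refine ⟨?_, hdetformula, hdetformula ▸ hdetpos, ?_⟩
  · apply posdef_fin_two _ _ _ hA
    have := hdetformula
    rw [Matrix.det_fin_two_of] at this
    nlinarith [this, hdetpos]
  · rw [Matrix.trace_fin_two_of]
    positivity
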